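/- Consider the surface metric dr² + ρ(r)² dθ² on (0,1) × S¹ with ρ(r) = 2 + r⁵ sin(1/r). Then the quantity -ρ''(r)/ρ(r) (the sectional curvature) is bounded in absolute value by 12 on (0,1), while the quantity ρ'(r)ρ''(r) - ρ(r)ρ'''(r) is unbounded as r → 0⁺. -/

import Mathlib

/-!
Write `s = sin (1/r)` and `c = cos (1/r)`, so that `ρ'' = (20r³ - r) s - 8r² c`. For
`r ≤ 13/20` the crude bound `|ρ''| ≤ 20r³ + 8r² + r` is below `12 ≤ 12ρ`. For `r > 13/20` one has
`1/r < π/2`, so `s, c ≥ 0`; then `ρ ≥ 2` and `-8 ≤ ρ'' ≤ 19`. Differentiating once more produces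
the term `c / r` in `ρ'''`, and along `r = 1/(2πn)`, where `s = 0` and `c = 1`, the quantity
`ρ'ρ'' - ρρ'''` equals `8r⁵ + 72r - 2/r → -∞`.
-/

noncomputable def ρ : ℝ → ℝ := fun r => 2 + r ^ 5 * Real.sin (1 / r)

open Filter Topology Real

noncomputable def ρ' (r : ℝ) : ℝ := 5 * r ^ 4 * sin (1 / r) - r ^ 3 * cos (1 / r)

noncomputable def ρ'' (r : ℝ) : ℝ := (20 * r ^ 3 - r) * sin (1 / r) - 8 * r ^ 2 * cos (1 / r)

noncomputable def ρ''' (r : ℝ) : ℝ :=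
  (60 * r ^ 2 - 9) * sin (1 / r) - 36 * r * cos (1 / r) + cos (1 / r) / r

section Derivatives

variable {r : ℝ}

lemma hasDerivAt_one_div (hr : r ≠ 0) : HasDerivAt (fun x : ℝ => 1 / x) (-(r ^ 2)⁻¹) r := by
  simpa only [one_div] using hasDerivAt_inv hr

lemma hasDerivAt_sin_one_div (hr : r ≠ 0) :
    HasDerivAt (fun x : ℝ => sin (1 / x)) (cos (1 / r) * -(r ^ 2)⁻¹) r :=
  (hasDerivAt_one_div hr).sin

lemma hasDerivAt_cos_one_div (hr : r ≠ 0) :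
    HasDerivAt (fun x : ℝ => cos (1 / x)) (-sin (1 / r) * -(r ^ 2)⁻¹) r :=
  (hasDerivAt_one_div hr).cos

lemma hasDerivAt_ρ (hr : r ≠ 0) : HasDerivAt ρ (ρ' r) r := by
  have h := ((hasDerivAt_pow 5 r).mul (hasDerivAt_sin_one_div hr)).const_add 2
  refine h.congr_deriv ?_
  unfold ρ'
  field_simp
  ring

lemma hasDerivAt_ρ' (hr : r ≠ 0) : HasDerivAt ρ' (ρ'' r) r := by
  refine ((((hasDerivAt_pow 4 r).const_mul 5).mul (hasDerivAt_sin_one_div hr)).sub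
    ((hasDerivAt_pow 3 r).mul (hasDerivAt_cos_one_div hr))).congr_deriv ?_
  unfold ρ''
  field_simp
  ring

lemma hasDerivAt_ρ'' (hr : r ≠ 0) : HasDerivAt ρ'' (ρ''' r) r := by
  refine (((((hasDerivAt_pow 3 r).const_mul 20).sub (hasDerivAt_id' r)).mul
    (hasDerivAt_sin_one_div hr)).sub
    (((hasDerivAt_pow 2 r).const_mul 8).mul (hasDerivAt_cos_one_div hr))).congr_deriv ?_
  unfold ρ'''
  simp only [Pi.sub_apply]
  field_simp
  ring

lemma deriv_ρ (hr : r ≠ 0) : deriv ρ r = ρ' r := (hasDerivAt_ρ hr).deriv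

lemma iteratedDeriv_two_ρ (hr : r ≠ 0) : iteratedDeriv 2 ρ r = ρ'' r := by
  have h : deriv ρ =ᶠ[𝓝 r] ρ' := (eventually_ne_nhds hr).mono fun _ hx => deriv_ρ hx
  rw [iteratedDeriv_succ, iteratedDeriv_one, h.deriv_eq, (hasDerivAt_ρ' hr).deriv]

lemma iteratedDeriv_three_ρ (hr : r ≠ 0) : iteratedDeriv 3 ρ r = ρ''' r := by
  have h : iteratedDeriv 2 ρ =ᶠ[𝓝 r] ρ'' :=
    (eventually_ne_nhds hr).mono fun _ hx => iteratedDeriv_two_ρ hx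
  rw [iteratedDeriv_succ, h.deriv_eq, (hasDerivAt_ρ'' hr).deriv]

end Derivatives

section Curvature

variable {r : ℝ}

lemma one_le_ρ (hr : |r| ≤ 1) : 1 ≤ ρ r := by
  have h : |r ^ 5 * sin (1 / r)| ≤ 1 := by
    rw [abs_mul, abs_pow]
    exact mul_le_one₀ (pow_le_one₀ (abs_nonneg r) hr) (abs_nonneg _) (abs_sin_le_one _)
  unfold ρ
  linarith [neg_abs_le (r ^ 5 * sin (1 / r))]

lemma abs_ρ''_le (hr : 0 ≤ r) : |ρ'' r| ≤ 20 * r ^ 3 + 8 * r ^ 2 + r := by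
  have hs := abs_sin_le_one (1 / r)
  have hc := abs_cos_le_one (1 / r)
  calc |ρ'' r| ≤ |20 * r ^ 3 - r| * |sin (1 / r)| + 8 * r ^ 2 * |cos (1 / r)| := by
        unfold ρ''
        refine (abs_sub _ _).trans_eq ?_
        rw [abs_mul, abs_mul, abs_of_nonneg (by positivity : (0 : ℝ) ≤ 8 * r ^ 2)]
    _ ≤ |20 * r ^ 3 - r| + 8 * r ^ 2 :=
        add_le_add (mul_le_of_le_one_right (abs_nonneg _) hs)
          (mul_le_of_le_one_right (by positivity) hc)
    _ ≤ 20 * r ^ 3 + 8 * r ^ 2 + r := by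
        have := abs_sub (20 * r ^ 3) r
        rw [abs_of_nonneg (by positivity : (0 : ℝ) ≤ 20 * r ^ 3), abs_of_nonneg hr] at this
        linarith

lemma abs_ρ''_le_twelve_of_le (hr₀ : 0 ≤ r) (hr : r ≤ 13 / 20) : |ρ'' r| ≤ 12 :=
  calc |ρ'' r| ≤ 20 * r ^ 3 + 8 * r ^ 2 + r := abs_ρ''_le hr₀
    _ ≤ 20 * (13 / 20) ^ 3 + 8 * (13 / 20) ^ 2 + 13 / 20 := by gcongr
    _ ≤ 12 := by norm_num

lemma abs_ρ''_le_twelve_mul_ρ_of_gt (hr : 13 / 20 < r) (hr₁ : r < 1) : |ρ'' r| ≤ 12 * ρ r := by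
  have hr₀ : 0 < r := by linarith
  have hinv : 1 / r ≤ 20 / 13 := by
    rw [div_le_div_iff₀ hr₀ (by norm_num)]
    linarith
  have hinv₀ : 0 ≤ 1 / r := by positivity
  have hπ := pi_gt_d2
  have hs : 0 ≤ sin (1 / r) := sin_nonneg_of_nonneg_of_le_pi hinv₀ (by linarith)
  have hc : 0 ≤ cos (1 / r) := cos_nonneg_of_mem_Icc ⟨by linarith, by linarith⟩
  have hs₁ := sin_le_one (1 / r)
  have hc₁ := cos_le_one (1 / r)
  have hρ : 2 ≤ ρ r := by
    unfold ρ
    linarith [mul_nonneg (pow_nonneg hr₀.le 5) hs]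
  have hr3 : r ^ 3 ≤ 1 := pow_le_one₀ hr₀.le hr₁.le
  have hr2 : r ^ 2 ≤ 1 := pow_le_one₀ hr₀.le hr₁.le
  have hcoef : 0 ≤ 20 * r ^ 3 - r := by nlinarith
  rw [abs_le]
  unfold ρ''
  constructor
  · nlinarith [mul_nonneg hcoef hs, mul_le_mul_of_nonneg_left hc₁ (sq_nonneg r)]
  · nlinarith [mul_le_mul_of_nonneg_left hs₁ hcoef, mul_nonneg (sq_nonneg r) hc]

lemma abs_ρ''_le_twelve_mul_ρ (hr : r ∈ Set.Ioo (0 : ℝ) 1) : |ρ'' r| ≤ 12 * ρ r := by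
  rcases le_or_gt r (13 / 20) with hle | hgt
  · have := one_le_ρ (abs_le.2 ⟨by linarith [hr.1], hr.2.le⟩)
    linarith [abs_ρ''_le_twelve_of_le hr.1.le hle]
  · exact abs_ρ''_le_twelve_mul_ρ_of_gt hgt hr.2

end Curvature

lemma ρ'_mul_ρ''_sub_ρ_mul_ρ'''_of_cos_eq_one {r : ℝ} (hc : cos (1 / r) = 1) :
    ρ' r * ρ'' r - ρ r * ρ''' r = 8 * r ^ 5 + 72 * r - 2 / r := by
  have hs : sin (1 / r) = 0 := sin_eq_zero_iff_cos_eq.2 (Or.inl hc)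
  unfold ρ ρ' ρ'' ρ'''
  rw [hs, hc]
  ring

lemma tendsto_sub_div_nhdsGT_zero_atBot {p : ℝ → ℝ} {c : ℝ} (hp : ContinuousAt p 0)
    (hc : 0 < c) : Tendsto (fun r => p r - c / r) (𝓝[>] 0) atBot := by
  simpa only [sub_eq_add_neg, div_eq_mul_inv, Function.comp_apply] using
    (hp.tendsto.mono_left nhdsWithin_le_nhds).add_atBot
      (tendsto_neg_atTop_atBot.comp (tendsto_inv_nhdsGT_zero.const_mul_atTop hc))

lemma not_bddAbove_abs_image_Ioo_of_tendsto {ι : Type*} {l : Filter ι} [l.NeBot] {g : ℝ → ℝ}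
    {u : ι → ℝ} (hu : Tendsto u l (𝓝[>] 0)) (hg : Tendsto (g ∘ u) l atBot) {ε : ℝ}
    (hε : 0 < ε) : ¬BddAbove ((fun r => |g r|) '' Set.Ioo 0 ε) := by
  rintro ⟨M, hM⟩
  obtain ⟨n, hn, hgn⟩ := ((hu.eventually (Ioo_mem_nhdsGT hε)).and
    ((tendsto_abs_atBot_atTop.comp hg).eventually_gt_atTop M)).exists
  exact (hM ⟨u n, hn, rfl⟩).not_gt hgn

/-- For the rotationally symmetric metric `dr² + ρ(r)²dθ²` with
`ρ(r) = 2 + r⁵ sin(1/r)`: the sectional curvature `-ρ''/ρ` is bounded by `12` in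
absolute value on `(0,1)`, while `ρ'ρ'' - ρρ'''` is unbounded as `r → 0⁺`. -/
theorem bounded_zeroth_unbounded_first :
    (∀ r ∈ Set.Ioo (0 : ℝ) 1, |(-(iteratedDeriv 2 ρ r) / ρ r)| ≤ 12) ∧
      (∀ ε > (0 : ℝ), ¬ BddAbove
        ((fun r => |deriv ρ r * iteratedDeriv 2 ρ r - ρ r * iteratedDeriv 3 ρ r|) ''
          Set.Ioo 0 ε)) := by
  refine ⟨fun r hr => ?_, fun ε hε => ?_⟩
  · have hρ : 0 < ρ r := by linarith [one_le_ρ (abs_le.2 ⟨by linarith [hr.1], hr.2.le⟩)]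
    rw [iteratedDeriv_two_ρ hr.1.ne', abs_div, abs_neg, abs_of_pos hρ, div_le_iff₀ hρ]
    exact abs_ρ''_le_twelve_mul_ρ hr
  · let u : ℕ → ℝ := fun n => (n * (2 * π))⁻¹
    have hu : Tendsto u atTop (𝓝[>] 0) :=
      tendsto_inv_atTop_nhdsGT_zero.comp
        (tendsto_natCast_atTop_atTop.atTop_mul_const (by positivity))
    have hQ := tendsto_sub_div_nhdsGT_zero_atBot (p := fun r => 8 * r ^ 5 + 72 * r)
      (by fun_prop) two_pos
    refine not_bddAbove_abs_image_Ioo_of_tendsto hu ((hQ.comp hu).congr' ?_) hε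
    filter_upwards [eventually_gt_atTop 0] with n hn
    have hun : u n ≠ 0 := by positivity
    have hcos : cos (1 / u n) = 1 := by simp [u, cos_nat_mul_two_pi]
    rw [Function.comp_apply, Function.comp_apply, deriv_ρ hun, iteratedDeriv_two_ρ hun,
      iteratedDeriv_three_ρ hun, ρ'_mul_ρ''_sub_ρ_mul_ρ'''_of_cos_eq_one hcos]
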